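/- For a positive functional $0 \le f \in A^\sim$, the map $T_f : (A^\sim)^\sim_n \to A^\sim$ defined by $T_f(F) = F \cdot f$ is a lattice homomorphism, i.e., $T_f(F \vee G) = T_f(F) \vee T_f(G)$ for all $F, G \in (A^\sim)^\sim_n$. -/

import Mathlib

noncomputable section

/-- Riesz space (real vector lattice) axioms, as a `Prop`-valued class. -/
class RieszSp (E : Type*) [AddCommGroup E] [Lattice E] [Module ℝ E] : Prop where
  add_le_add_left : ∀ a b : E, a ≤ b → ∀ c : E, c + a ≤ c + b
  smul_nonneg : ∀ (r : ℝ) (a : E), 0 ≤ r → 0 ≤ a → 0 ≤ r • a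

/-- Archimedean (real) f-algebra axioms, as a `Prop`-valued class. -/
class FAlg (A : Type*) [CommRing A] [Lattice A] [Module ℝ A] extends RieszSp A : Prop where
  mul_nonneg : ∀ a b : A, 0 ≤ a → 0 ≤ b → 0 ≤ a * b
  disjoint_mul : ∀ a b c : A, a ⊓ b = 0 → 0 ≤ c → (c * a) ⊓ b = 0
  archimedean : ∀ a b : A, (∀ n : ℕ, (n : ℝ) • a ≤ b) → a ≤ 0

/-- A linear functional is order bounded if it is bounded on order intervals. -/
def OrderBddFn {E : Type*} [AddCommGroup E] [Lattice E] [Module ℝ E]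
    (φ : E →ₗ[ℝ] ℝ) : Prop :=
  ∀ a b : E, ∃ M : ℝ, ∀ x : E, a ≤ x → x ≤ b → |φ x| ≤ M

/-- A linear functional is order continuous if it sends downward directed sets with
infimum `0` to nets converging to `0`. -/
def OrdContFn {E : Type*} [AddCommGroup E] [Lattice E] [Module ℝ E]
    (φ : E →ₗ[ℝ] ℝ) : Prop :=
  ∀ s : Set E, s.Nonempty → DirectedOn (· ≥ ·) s → IsGLB s 0 →
    ∀ ε : ℝ, 0 < ε → ∃ d ∈ s, ∀ d' ∈ s, d' ≤ d → |φ d'| < ε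

/-- The data realizing `D` as the order dual `A^∼` of the f-algebra `A` (with separating
order dual) and `N` as the order continuous part `(A^∼)^∼_n` of the order bidual of `A`,
together with the Arens multiplication and its actions. -/
class DualSetting (A : Type*) [CommRing A] [Lattice A] [Module ℝ A]
    (D : Type*) [AddCommGroup D] [Lattice D] [Module ℝ D]
    (N : Type*) [CommRing N] [Lattice N] [Module ℝ N] where
  dual : D →ₗ[ℝ] A →ₗ[ℝ] ℝ
  bidual : N →ₗ[ℝ] D →ₗ[ℝ] ℝ
  dual_inj : Function.Injective dual
  bidual_inj : Function.Injective bidual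
  dual_bdd : ∀ d : D, OrderBddFn (dual d)
  dual_surj : ∀ φ : A →ₗ[ℝ] ℝ, OrderBddFn φ → ∃ d : D, dual d = φ
  dual_order : ∀ d : D, 0 ≤ d ↔ ∀ a : A, 0 ≤ a → 0 ≤ dual d a
  bidual_bdd : ∀ F : N, OrderBddFn (bidual F)
  bidual_cont : ∀ F : N, OrdContFn (bidual F)
  bidual_surj : ∀ Φ : D →ₗ[ℝ] ℝ, OrderBddFn Φ → OrdContFn Φ → ∃ F : N, bidual F = Φ
  bidual_order : ∀ F : N, 0 ≤ F ↔ ∀ d : D, 0 ≤ d → 0 ≤ bidual F d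
  separating : ∀ a : A, (∀ d : D, dual d a = 0) → a = 0
  /-- the action `f ⋅ a` of `A` on `A^∼`:  `(f ⋅ a)(b) = f (a b)` -/
  dsmul : A → D → D
  dsmul_eval : ∀ (a : A) (f : D) (b : A), dual (dsmul a f) b = dual f (a * b)
  /-- the action `F ⋅ f` of `(A^∼)^∼_n` on `A^∼`:  `(F ⋅ f)(a) = F (f ⋅ a)` -/
  nsmul : N → D → D
  nsmul_eval : ∀ (F : N) (f : D) (a : A), dual (nsmul F f) a = bidual F (dsmul a f)
  /-- the Arens product on `(A^∼)^∼_n`:  `(F * G)(f) = F (G ⋅ f)` -/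
  mul_eval : ∀ (F G : N) (f : D), bidual (F * G) f = bidual F (nsmul G f)

variable {A : Type*} [CommRing A] [Lattice A] [Module ℝ A] [FAlg A]
variable {D : Type*} [AddCommGroup D] [Lattice D] [Module ℝ D] [RieszSp D]
variable {N : Type*} [CommRing N] [Lattice N] [Module ℝ N] [FAlg N]
variable [P : DualSetting A D N]
/-
An additive map between lattice ordered groups that preserves disjointness is a lattice
homomorphism, so it suffices that `K₁ ⊓ K₂ = 0` in `(A^∼)^∼_n` forces `u ⊓ v = 0` for `u = K₁ ⋅ f`,
`v = K₂ ⋅ f`. Put `w = u ⊓ v`. In an f-algebra disjoint elements have product zero, so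
`K₁(w) ≤ K₁(v) = (K₁ K₂)(f) = 0`. To see that `w(a) = 0` for `0 ≤ a ∈ A`, realise the evaluation at
`a` as a positive element `â` of `(A^∼)^∼_n` (evaluations are order continuous on `A^∼`) and split
`â = â ⊓ n K₁ + x` with `x = (â - n K₁)⁺`. The first summand kills `w`, while
`x(w) ≤ x(u) = (x K₁)(f)`, and disjointness of `x` from `(â - n K₁)⁻` gives `n (x K₁) ≤ x â ≤ â²`.
Hence `n ⋅ w(a) ≤ â²(f)` for every `n`, so `w(a) = 0`.
-/

instance RieszSp.toIsOrderedAddMonoid {E : Type*} [AddCommGroup E] [Lattice E] [Module ℝ E]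
    [RieszSp E] : IsOrderedAddMonoid E where
  add_le_add_left a b h c := by simpa only [add_comm c] using RieszSp.add_le_add_left a b h c

instance RieszSp.toPosSMulMono {E : Type*} [AddCommGroup E] [Lattice E] [Module ℝ E]
    [RieszSp E] : PosSMulMono ℝ E :=
  .of_smul_nonneg fun r hr x hx => RieszSp.smul_nonneg r x hr hx

instance FAlg.toPosMulMono {A : Type*} [CommRing A] [Lattice A] [Module ℝ A] [FAlg A] :
    PosMulMono A where
  mul_le_mul_of_nonneg_left c hc a b hab := by
    simpa only [mul_sub, sub_nonneg] using FAlg.mul_nonneg c (b - a) hc (sub_nonneg.2 hab)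

instance FAlg.toMulPosMono {A : Type*} [CommRing A] [Lattice A] [Module ℝ A] [FAlg A] :
    MulPosMono A :=
  PosMulMono.toMulPosMono

section LatticeOrderedGroup

variable {α β : Type*} [AddCommGroup α] [Lattice α] [IsOrderedAddMonoid α]
  [AddCommGroup β] [Lattice β] [IsOrderedAddMonoid β]

lemma inf_add_posPart_sub (a b : α) : a ⊓ b + (a - b)⁺ = a := by
  rw [← eq_sub_iff_add_eq, posPart_def, sub_sup, sub_sub_cancel, sub_zero, inf_comm]

lemma AddMonoidHom.map_inf_of_disjoint (T : α →+ β)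
    (hT : ∀ x y : α, x ⊓ y = 0 → T x ⊓ T y = 0) (a b : α) : T (a ⊓ b) = T a ⊓ T b := by
  have hdisj : (a - a ⊓ b) ⊓ (b - a ⊓ b) = 0 := by rw [← inf_sub, sub_self]
  have hshift (c : α) : T c = T (a ⊓ b) + T (c - a ⊓ b) := by rw [← map_add, add_sub_cancel]
  rw [hshift a, hshift b, ← add_inf, hT _ _ hdisj, add_zero]

lemma AddMonoidHom.map_sup_of_disjoint (T : α →+ β)
    (hT : ∀ x y : α, x ⊓ y = 0 → T x ⊓ T y = 0) (a b : α) : T (a ⊔ b) = T a ⊔ T b := by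
  have h := congrArg T (inf_add_sup a b)
  rw [map_add, map_add, T.map_inf_of_disjoint hT, ← inf_add_sup (T a) (T b)] at h
  exact add_left_cancel h

end LatticeOrderedGroup

section Extension

variable {E : Type*} [AddCommGroup E] [Lattice E] [IsOrderedAddMonoid E] [Module ℝ E]
  [PosSMulMono ℝ E]

/-- The Kantorovich extension `x ↦ p x⁺ - p x⁻`. -/
lemma exists_linearMap_eq_of_nonneg (p : E → ℝ)
    (hadd : ∀ x y : E, 0 ≤ x → 0 ≤ y → p (x + y) = p x + p y)
    (hsmul : ∀ (r : ℝ) (x : E), 0 ≤ r → 0 ≤ x → p (r • x) = r * p x) :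
    ∃ φ : E →ₗ[ℝ] ℝ, ∀ x : E, 0 ≤ x → φ x = p x := by
  have hdecomp (x : E) {y z : E} (hy : 0 ≤ y) (hz : 0 ≤ z) (hx : x = y - z) :
      p x⁺ - p x⁻ = p y - p z := by
    have hsum : x⁺ + z = y + x⁻ := by
      rw [← sub_eq_sub_iff_add_eq_add, posPart_sub_negPart, hx]
    have := congrArg p hsum
    rw [hadd _ _ (posPart_nonneg x) hz, hadd _ _ hy (negPart_nonneg x)] at this
    linarith
  refine ⟨{ toFun := fun x => p x⁺ - p x⁻, map_add' := fun x y => ?_, map_smul' := fun r x => ?_ },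
    fun x hx => ?_⟩
  · rw [hdecomp (x + y) (add_nonneg (posPart_nonneg x) (posPart_nonneg y))
      (add_nonneg (negPart_nonneg x) (negPart_nonneg y))
      (by rw [add_sub_add_comm, posPart_sub_negPart, posPart_sub_negPart]),
      hadd _ _ (posPart_nonneg x) (posPart_nonneg y),
      hadd _ _ (negPart_nonneg x) (negPart_nonneg y)]
    ring
  · rcases le_total 0 r with hr | hr
    · rw [RingHom.id_apply, smul_eq_mul,
        hdecomp (r • x) (smul_nonneg hr (posPart_nonneg x)) (smul_nonneg hr (negPart_nonneg x))
          (by rw [← smul_sub, posPart_sub_negPart]),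
        hsmul _ _ hr (posPart_nonneg x), hsmul _ _ hr (negPart_nonneg x)]
      ring
    · have hr' : 0 ≤ -r := neg_nonneg.2 hr
      rw [RingHom.id_apply, smul_eq_mul,
        hdecomp (r • x) (smul_nonneg hr' (negPart_nonneg x)) (smul_nonneg hr' (posPart_nonneg x))
          (by rw [← smul_sub, ← neg_sub, posPart_sub_negPart, neg_smul_neg]),
        hsmul _ _ hr' (negPart_nonneg x), hsmul _ _ hr' (posPart_nonneg x)]
      ring
  · have hp0 : p 0 = 0 := by simpa using hadd 0 0 le_rfl le_rfl
    simp [posPart_eq_self.2 hx, negPart_eq_zero.2 hx, hp0]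

end Extension

lemma orderBddFn_of_monotone {E : Type*} [AddCommGroup E] [Lattice E] [Module ℝ E]
    {φ : E →ₗ[ℝ] ℝ} (hφ : Monotone φ) : OrderBddFn φ :=
  fun a b => ⟨|φ a| + |φ b|, fun x hax hxb => abs_le.2
    ⟨by linarith [hφ hax, neg_abs_le (φ a), abs_nonneg (φ b)],
      by linarith [hφ hxb, le_abs_self (φ b), abs_nonneg (φ a)]⟩⟩

lemma nonpos_of_forall_nat_mul_le {x C : ℝ} (h : ∀ n : ℕ, n * x ≤ C) : x ≤ 0 := by
  by_contra! hx
  obtain ⟨n, hn⟩ := exists_nat_gt (C / x)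
  linarith [h n, (div_lt_iff₀ hx).1 hn]

namespace FAlg

variable {R : Type*} [CommRing R] [Lattice R] [Module ℝ R] [FAlg R]

lemma mul_eq_zero_of_inf_eq_zero {a b : R} (h : a ⊓ b = 0) : a * b = 0 := by
  have h₁ : (b * a) ⊓ b = 0 := FAlg.disjoint_mul a b b h (h ▸ inf_le_right)
  have h₂ : (a * b) ⊓ (b * a) = 0 :=
    FAlg.disjoint_mul b (b * a) a (by rw [inf_comm, h₁]) (h ▸ inf_le_left)
  rwa [mul_comm b a, inf_idem] at h₂

lemma nsmul_mul_posPart_sub_le (L K : R) (n : ℕ) :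
    n • ((L - n • K)⁺ * K) ≤ (L - n • K)⁺ * L := by
  have h : (L - n • K)⁺ * (n • K - L) ≤ 0 :=
    calc (L - n • K)⁺ * (n • K - L) ≤ (L - n • K)⁺ * (L - n • K)⁻ :=
          mul_le_mul_of_nonneg_left (by rw [negPart_def, neg_sub]; exact le_sup_left)
            (posPart_nonneg _)
      _ = 0 := mul_eq_zero_of_inf_eq_zero (posPart_inf_negPart_eq_zero _)
  rwa [mul_sub, sub_nonpos, mul_smul_comm] at h

end FAlg

namespace DualSetting

section

omit [FAlg A] [RieszSp D] [FAlg N]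

lemma dual_nonneg {d : D} (hd : 0 ≤ d) {a : A} (ha : 0 ≤ a) : 0 ≤ P.dual d a :=
  (P.dual_order d).1 hd a ha

lemma bidual_nonneg {F : N} (hF : 0 ≤ F) {d : D} (hd : 0 ≤ d) : 0 ≤ P.bidual F d :=
  (P.bidual_order F).1 hF d hd

variable (P) in
def nsmulHom (f : D) : N →+ D :=
  AddMonoidHom.mk' (fun F => P.nsmul F f) fun F G => P.dual_inj <| LinearMap.ext fun a => by
    simp only [P.nsmul_eval, map_add, LinearMap.add_apply]

end

section

omit [FAlg A] [FAlg N]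

lemma dual_le_dual {d e : D} (h : d ≤ e) {a : A} (ha : 0 ≤ a) : P.dual d a ≤ P.dual e a := by
  simpa only [map_sub, LinearMap.sub_apply, sub_nonneg] using dual_nonneg (sub_nonneg.2 h) ha

lemma le_of_forall_dual_le {d e : D} (h : ∀ a : A, 0 ≤ a → P.dual d a ≤ P.dual e a) : d ≤ e := by
  rw [← sub_nonneg, P.dual_order]
  simpa only [map_sub, LinearMap.sub_apply, sub_nonneg] using h

lemma bidual_mono {F : N} (hF : 0 ≤ F) : Monotone (P.bidual F) :=
  (monotone_iff_map_nonneg _).2 fun _ => bidual_nonneg hF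

end

omit [FAlg A] [RieszSp D] in
lemma bidual_le_bidual {F G : N} (h : F ≤ G) {d : D} (hd : 0 ≤ d) :
    P.bidual F d ≤ P.bidual G d := by
  simpa only [map_sub, LinearMap.sub_apply, sub_nonneg] using bidual_nonneg (sub_nonneg.2 h) hd

section

omit [RieszSp D] [FAlg N]

lemma dsmul_nonneg {a : A} (ha : 0 ≤ a) {f : D} (hf : 0 ≤ f) : 0 ≤ P.dsmul a f :=
  (P.dual_order _).2 fun b hb => by
    rw [P.dsmul_eval]; exact dual_nonneg hf (FAlg.mul_nonneg a b ha hb)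

lemma nsmul_nonneg {F : N} (hF : 0 ≤ F) {f : D} (hf : 0 ≤ f) : 0 ≤ P.nsmul F f :=
  (P.dual_order _).2 fun a ha => by
    rw [P.nsmul_eval]; exact bidual_nonneg hF (dsmul_nonneg ha hf)

end

section

omit [FAlg N]

lemma exists_mem_lowerBounds_dual_eq_iInf {s : Set D} (hne : s.Nonempty)
    (hdir : DirectedOn (· ≥ ·) s) (hs : ∀ d ∈ s, 0 ≤ d) :
    ∃ e ∈ lowerBounds s, ∀ a : A, 0 ≤ a → P.dual e a = ⨅ d : s, P.dual d a := by
  have : Nonempty s := hne.to_subtype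
  have hbdd (b : A) (hb : 0 ≤ b) : BddBelow (Set.range fun d : s => P.dual d b) :=
    ⟨0, by rintro _ ⟨d, rfl⟩; exact dual_nonneg (hs d d.2) hb⟩
  have hadd (x y : A) (hx : 0 ≤ x) (hy : 0 ≤ y) :
      ⨅ d : s, P.dual d (x + y) = (⨅ d : s, P.dual d x) + ⨅ d : s, P.dual d y := by
    refine le_antisymm (le_ciInf_add_ciInf fun d₁ d₂ => ?_) (le_ciInf fun d => ?_)
    · obtain ⟨d₃, hd₃, h₁, h₂⟩ := hdir d₁ d₁.2 d₂ d₂.2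
      calc ⨅ d : s, P.dual d (x + y) ≤ P.dual d₃ (x + y) :=
            ciInf_le (hbdd _ (add_nonneg hx hy)) ⟨d₃, hd₃⟩
        _ ≤ P.dual d₁ x + P.dual d₂ y := by
          rw [map_add]; exact add_le_add (dual_le_dual h₁ hx) (dual_le_dual h₂ hy)
    · rw [map_add]
      exact add_le_add (ciInf_le (hbdd x hx) d) (ciInf_le (hbdd y hy) d)
  obtain ⟨φ, hφ⟩ := exists_linearMap_eq_of_nonneg (fun b => ⨅ d : s, P.dual d b) hadd
    fun r x hr _ => by simp only [map_smul, smul_eq_mul, Real.mul_iInf_of_nonneg hr]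
  have hφ_mono : Monotone φ := (monotone_iff_map_nonneg φ).2 fun b hb =>
    (hφ b hb).symm ▸ le_ciInf fun d => dual_nonneg (P := P) (hs d d.2) hb
  obtain ⟨e, he⟩ := P.dual_surj φ (orderBddFn_of_monotone hφ_mono)
  refine ⟨e, fun d hd => le_of_forall_dual_le (P := P) fun a ha => ?_,
    fun a ha => by rw [he, hφ a ha]⟩
  rw [he, hφ a ha]
  exact ciInf_le (hbdd a ha) ⟨d, hd⟩

lemma exists_mem_dual_lt {s : Set D} (hne : s.Nonempty) (hdir : DirectedOn (· ≥ ·) s)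
    (hs : IsGLB s 0) {a : A} (ha : 0 ≤ a) {ε : ℝ} (hε : 0 < ε) : ∃ d ∈ s, P.dual d a < ε := by
  obtain ⟨e, he_low, he⟩ :=
    exists_mem_lowerBounds_dual_eq_iInf (P := P) hne hdir fun _ hd => hs.1 hd
  have : Nonempty s := hne.to_subtype
  have hinf : ⨅ d : s, P.dual d a < ε := by
    rw [← he a ha]
    calc P.dual e a ≤ P.dual 0 a := dual_le_dual (hs.2 he_low) ha
      _ < ε := by rwa [map_zero, LinearMap.zero_apply]
  obtain ⟨d, hd⟩ := exists_lt_of_ciInf_lt hinf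
  exact ⟨d, d.2, hd⟩

lemma ordContFn_dual_flip {a : A} (ha : 0 ≤ a) : OrdContFn (P.dual.flip a) := by
  intro s hne hdir hs ε hε
  obtain ⟨d, hd, hlt⟩ := exists_mem_dual_lt (P := P) hne hdir hs ha hε
  refine ⟨d, hd, fun d' hd' hle => ?_⟩
  rw [LinearMap.flip_apply, abs_of_nonneg (dual_nonneg (hs.1 hd') ha)]
  exact (dual_le_dual hle ha).trans_lt hlt

lemma exists_bidual_eq_dual_flip {a : A} (ha : 0 ≤ a) :
    ∃ L : N, 0 ≤ L ∧ P.bidual L = P.dual.flip a := by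
  have hmono : Monotone (P.dual.flip a) :=
    (monotone_iff_map_nonneg _).2 fun _ hd => dual_nonneg hd ha
  obtain ⟨L, hL⟩ := P.bidual_surj _ (orderBddFn_of_monotone hmono) (ordContFn_dual_flip ha)
  exact ⟨L, (P.bidual_order L).2 fun d hd => hL ▸ dual_nonneg hd ha, hL⟩

end

omit [FAlg A] in
lemma nat_mul_bidual_le {f : D} (hf : 0 ≤ f) {K₁ K₂ : N} (hK₁ : 0 ≤ K₁) (hK : K₁ * K₂ = 0)
    {w : D} (hw : 0 ≤ w) (hwu : w ≤ P.nsmul K₁ f) (hwv : w ≤ P.nsmul K₂ f) {L : N} (hL : 0 ≤ L)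
    (n : ℕ) : n * P.bidual L w ≤ P.bidual (L * L) f := by
  set x := (L - n • K₁)⁺
  have hx : 0 ≤ x := posPart_nonneg _
  have hnK : 0 ≤ n • K₁ := _root_.nsmul_nonneg hK₁ n
  have hinf : P.bidual (L ⊓ n • K₁) w ≤ 0 :=
    calc P.bidual (L ⊓ n • K₁) w ≤ P.bidual (n • K₁) w := bidual_le_bidual inf_le_right hw
      _ = n * P.bidual K₁ w := by rw [map_nsmul, LinearMap.smul_apply, nsmul_eq_mul]
      _ ≤ n * P.bidual K₁ (P.nsmul K₂ f) := by gcongr; exact bidual_mono hK₁ hwv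
      _ = 0 := by rw [← P.mul_eval, hK, map_zero, LinearMap.zero_apply, mul_zero]
  have hrest : P.bidual x w ≤ P.bidual (x * K₁) f := by
    rw [P.mul_eval]; exact bidual_mono hx hwu
  have hbound : n • (x * K₁) ≤ L * L :=
    (FAlg.nsmul_mul_posPart_sub_le L K₁ n).trans
      (mul_le_mul_of_nonneg_right (sup_le (sub_le_self L hnK) hL) hL)
  calc n * P.bidual L w = n * (P.bidual (L ⊓ n • K₁) w + P.bidual x w) := by
        rw [← LinearMap.add_apply, ← map_add, inf_add_posPart_sub]
    _ ≤ n * P.bidual (x * K₁) f := by gcongr; linarith [hinf, hrest]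
    _ = P.bidual (n • (x * K₁)) f := by rw [map_nsmul, LinearMap.smul_apply, nsmul_eq_mul]
    _ ≤ P.bidual (L * L) f := bidual_le_bidual hbound hf

lemma nsmul_inf_nsmul_eq_zero {f : D} (hf : 0 ≤ f) {K₁ K₂ : N} (h : K₁ ⊓ K₂ = 0) :
    P.nsmul K₁ f ⊓ P.nsmul K₂ f = 0 := by
  have hK₁ : 0 ≤ K₁ := h ▸ inf_le_left
  have hK₂ : 0 ≤ K₂ := h ▸ inf_le_right
  have hw : 0 ≤ P.nsmul K₁ f ⊓ P.nsmul K₂ f := le_inf (nsmul_nonneg hK₁ hf) (nsmul_nonneg hK₂ hf)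
  refine le_antisymm (le_of_forall_dual_le (P := P) fun a ha => ?_) hw
  obtain ⟨L, hL, hLa⟩ := exists_bidual_eq_dual_flip (P := P) ha
  rw [map_zero, LinearMap.zero_apply, ← LinearMap.flip_apply, ← hLa]
  exact nonpos_of_forall_nat_mul_le <| nat_mul_bidual_le hf hK₁
    (FAlg.mul_eq_zero_of_inf_eq_zero h) hw inf_le_left inf_le_right hL

end DualSetting

/-- For `0 ≤ f ∈ A^∼`, the map `T_f F = F ⋅ f` is a lattice homomorphism. -/
theorem stmt0 (f : D) (hf : 0 ≤ f) (F G : N) :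
    P.nsmul (F ⊔ G) f = P.nsmul F f ⊔ P.nsmul G f :=
  (P.nsmulHom f).map_sup_of_disjoint (fun _ _ h => DualSetting.nsmul_inf_nsmul_eq_zero hf h) F G
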